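/- arXiv:2603.11648 — 3 statements merged into one kernel-verified Lean document; each statement's English description precedes it below -/
import Mathlib

section
/- For any SPA (a VRA in which all component automata are DFAs and distinct procedural symbols have distinct call symbols under the linking function), if carcr is accepted, then carcar is accepted. Consequently, there is a deterministic VRA whose language contains carcr but not carcar and which therefore has no equivalent SPA over the same pushdown alphabet. -/
/-- A symbol of a pushdown alphabet: internal, call, or return. -/
inductive VSym (I C R : Type) : Type
  | int  : I → VSym I C R
  | call : C → VSym I C R
  | ret  : R → VSym I C R

/-- The set of well-matched words over a pushdown alphabet. -/
inductive WellMatched {I C R : Type} : List (VSym I C R) → Prop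
  | internal (u : List I) : WellMatched (u.map VSym.int)
  | bracket {w : List (VSym I C R)} (c : C) (r : R) :
      WellMatched w → WellMatched (VSym.call c :: w ++ [VSym.ret r])
  | concat {w₁ w₂ : List (VSym I C R)} :
      WellMatched w₁ → WellMatched w₂ → WellMatched (w₁ ++ w₂)

def VSym.isCall {I C R : Type} : VSym I C R → Bool
  | .call _ => true
  | _ => false

def VSym.isRet {I C R : Type} : VSym I C R → Bool
  | .ret _ => true
  | _ => false

/-- The depth of a word: the maximal excess of call symbols over return symbols
in any prefix (the deepest level of unmatched calls at any point). -/
def VSym.depth {I C R : Type} (w : List (VSym I C R)) : ℕ :=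
  (w.inits.map fun p => p.countP VSym.isCall - p.countP VSym.isRet).foldr max 0

/-- A visibly recursive automaton: a family of finite automata over the internal
and procedural symbols, identified by the component map `comp` (`none` denotes the
starting automaton `A^S`, `some J` the component automaton `A^J`), together with a
linking function `link` assigning to each procedural symbol a call/return pair.
Transitions of each component automaton stay within that component. -/
structure VRA (I C R P Q : Type) where
  /-- the linking function `f : Σ_proc → Σ_call × Σ_ret` -/
  link : P → C × R
  /-- the component automaton each state belongs to (`none` = starting automaton) -/
  comp : Q → Option P
  init : Q → Prop
  final : Q → Prop
  intTrans : Q → I → Q → Prop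
  procTrans : Q → P → Q → Prop
  intTrans_comp : ∀ ⦃q a p⦄, intTrans q a p → comp p = comp q
  procTrans_comp : ∀ ⦃q J p⦄, procTrans q J p → comp p = comp q

namespace VRA

variable {I C R P Q : Type}

/-- One step of a recursive run, on configurations (state, stack of states). -/
inductive Step (A : VRA I C R P Q) : Q × List Q → VSym I C R → Q × List Q → Prop
  | int {q q' : Q} {σ : List Q} {a : I} :
      A.intTrans q a q' → Step A (q, σ) (VSym.int a) (q', σ)
  | call {q q' p : Q} {σ : List Q} {J : P} {c : C} :
      A.procTrans q J p → (A.link J).1 = c → A.comp q' = some J → A.init q' →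
      Step A (q, σ) (VSym.call c) (q', p :: σ)
  | ret {q p : Q} {σ : List Q} {J : P} {r : R} :
      A.comp q = some J → A.final q → (A.link J).2 = r →
      Step A (q, p :: σ) (VSym.ret r) (p, σ)

/-- Recursive runs of a VRA. -/
inductive Run (A : VRA I C R P Q) : Q × List Q → List (VSym I C R) → Q × List Q → Prop
  | nil (cfg : Q × List Q) : Run A cfg [] cfg
  | cons {cfg₁ cfg₂ cfg₃ : Q × List Q} {a : VSym I C R} {w : List (VSym I C R)} :
      Step A cfg₁ a cfg₂ → Run A cfg₂ w cfg₃ → Run A cfg₁ (a :: w) cfg₃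

/-- The recursive language of the component automaton `A^J` (`J = none` is the
starting automaton): words with a recursive run from an initial state of the
component with empty stack to a final state of the component with empty stack. -/
def RecLang (A : VRA I C R P Q) (J : Option P) : Set (List (VSym I C R)) :=
  {w | ∃ qi qf, A.comp qi = J ∧ A.init qi ∧ A.comp qf = J ∧ A.final qf ∧
    Run A (qi, []) w (qf, [])}

/-- The language of a VRA: the recursive language of its starting automaton. -/
def Lang (A : VRA I C R P Q) : Set (List (VSym I C R)) := A.RecLang none

/-- Regular runs: runs of the component automata viewed as ordinary finite
automata over the alphabet `Σ_int ∪ Σ_proc`. -/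
inductive RegRun (A : VRA I C R P Q) : Q → List (I ⊕ P) → Q → Prop
  | nil (q : Q) : RegRun A q [] q
  | int {q q' p : Q} {a : I} {w : List (I ⊕ P)} :
      A.intTrans q a q' → RegRun A q' w p → RegRun A q (Sum.inl a :: w) p
  | proc {q q' p : Q} {J : P} {w : List (I ⊕ P)} :
      A.procTrans q J q' → RegRun A q' w p → RegRun A q (Sum.inr J :: w) p

/-- The regular language of the component automaton `A^J`, over `Σ_int ∪ Σ_proc`. -/
def RegLang (A : VRA I C R P Q) (J : Option P) : Set (List (I ⊕ P)) :=
  {w | ∃ qi qf, A.comp qi = J ∧ A.init qi ∧ A.comp qf = J ∧ A.final qf ∧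
    RegRun A qi w qf}

/-- A VRA is codeterministic if component automata linked to the same call/return
pair have pairwise disjoint recursive languages. -/
def Codeterministic (A : VRA I C R P Q) : Prop :=
  ∀ J J' : P, J ≠ J' → A.link J = A.link J' →
    A.RecLang (some J) ∩ A.RecLang (some J') = ∅

/-- A VRA is complete if every state has an outgoing transition on every symbol of
`Σ_int ∪ Σ_proc`, and for every call/return pair the recursive languages of the
linked component automata cover all well-matched words. -/
def Complete (A : VRA I C R P Q) : Prop :=
  (∀ (q : Q) (a : I), ∃ p, A.intTrans q a p) ∧
  (∀ (q : Q) (J : P), ∃ p, A.procTrans q J p) ∧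
  (∀ (c : C) (r : R),
    (⋃ J ∈ {J : P | A.link J = (c, r)}, A.RecLang (some J)) = {w | WellMatched w})

/-- A VRA is deterministic if every component automaton (including the starting
one) has a unique initial state and deterministic transitions, and procedural
transitions from a common state on procedural symbols with the same call symbol
agree on the procedural symbol. -/
def Deterministic (A : VRA I C R P Q) : Prop :=
  (∀ J : Option P, ∃! q, A.comp q = J ∧ A.init q) ∧
  (∀ q a p p', A.intTrans q a p → A.intTrans q a p' → p = p') ∧
  (∀ q J p p', A.procTrans q J p → A.procTrans q J p' → p = p') ∧
  (∀ q J J' p p', A.procTrans q J p → A.procTrans q J' p' →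
    (A.link J).1 = (A.link J').1 → J = J')

/-- All component automata of the VRA are complete DFAs: a unique initial state in
each component and exactly one outgoing transition per state and symbol. -/
def AllCompleteDFA (A : VRA I C R P Q) : Prop :=
  (∀ J : Option P, ∃! q, A.comp q = J ∧ A.init q) ∧
  (∀ (q : Q) (a : I), ∃! p, A.intTrans q a p) ∧
  (∀ (q : Q) (J : P), ∃! p, A.procTrans q J p)

/-- The size of a VRA: number of states plus number of transitions. -/
noncomputable def size (A : VRA I C R P Q) : ℕ :=
  Nat.card Q + Nat.card {t : Q × I × Q // A.intTrans t.1 t.2.1 t.2.2}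
    + Nat.card {t : Q × P × Q // A.procTrans t.1 t.2.1 t.2.2}

end VRA

/-- A system of procedural automata (SPA): a deterministic VRA in which distinct
procedural symbols have distinct call symbols under the linking function. -/
def VRA.IsSPA {I C R P Q : Type} (A : VRA I C R P Q) : Prop :=
  A.Deterministic ∧ ∀ J J' : P, J ≠ J' → (A.link J).1 ≠ (A.link J').1

abbrev sa' : VSym Unit Unit Unit := VSym.int ()
abbrev sc' : VSym Unit Unit Unit := VSym.call ()
abbrev sr' : VSym Unit Unit Unit := VSym.ret ()

/-! A run of a call block `c w r` from `q` to `p` with `w` internal amounts to a procedural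
transition `q →^J p` with `f(J) = ⟨c, r⟩` and `w ∈ L(A^J)`. An accepting run on `carcr`
therefore calls a procedure `J₁` accepting `a` and then a procedure `J₂` accepting `ε`, both
with call symbol `c`. In an SPA the call symbol determines the procedure, so `J₁ = J₂` and
the second call can read `a` as well. Without that restriction, letting `J₁ ≠ J₂` share the
linking pair gives a deterministic VRA accepting `carcr` but not `carcar`. -/

namespace VRA

variable {I C R P Q : Type} {A : VRA I C R P Q}

theorem RegRun.comp_eq {q p : Q} {w : List (I ⊕ P)} (h : A.RegRun q w p) :
    A.comp p = A.comp q := by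
  induction h with
  | nil => rfl
  | int ht _ ih => exact ih.trans (A.intTrans_comp ht)
  | proc ht _ ih => exact ih.trans (A.procTrans_comp ht)

theorem run_append_iff {cfg cfg' : Q × List Q} {w₁ w₂ : List (VSym I C R)} :
    A.Run cfg (w₁ ++ w₂) cfg' ↔ ∃ cfg₁, A.Run cfg w₁ cfg₁ ∧ A.Run cfg₁ w₂ cfg' := by
  induction w₁ generalizing cfg with
  | nil => exact ⟨fun h => ⟨cfg, .nil cfg, h⟩, fun ⟨_, .nil _, h⟩ => h⟩
  | cons x w₁ ih =>
    constructor
    · rintro (_ | ⟨hs, hr⟩)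
      obtain ⟨cfg₁, h₁, h₂⟩ := ih.mp hr
      exact ⟨cfg₁, .cons hs h₁, h₂⟩
    · rintro ⟨cfg₁, _ | ⟨hs, h₁⟩, h₂⟩
      exact .cons hs (ih.mpr ⟨cfg₁, h₁, h₂⟩)

theorem run_map_int_iff {q p : Q} {σ σ' : List Q} {u : List I} :
    A.Run (q, σ) (u.map VSym.int) (p, σ') ↔ σ' = σ ∧ A.RegRun q (u.map Sum.inl) p := by
  induction u generalizing q with
  | nil =>
    constructor
    · rintro (_ | _); exact ⟨rfl, .nil _⟩
    · rintro ⟨rfl, _ | _⟩; exact .nil _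
  | cons a u ih =>
    constructor
    · rintro (_ | ⟨hs, hr⟩)
      cases hs with | int ht => exact (ih.mp hr).imp_right (.int ht)
    · rintro ⟨rfl, _ | ⟨ht, hr⟩⟩
      exact .cons (.int ht) (ih.mpr ⟨rfl, hr⟩)

theorem run_map_int_nil_iff {q p : Q} {σ : List Q} {u : List I} :
    A.Run (q, σ) (u.map VSym.int) (p, σ) ↔ A.Run (q, []) (u.map VSym.int) (p, []) := by
  simp only [run_map_int_iff, true_and]

theorem run_call_ret_iff {q p : Q} {σ σ' : List Q} {c : C} {r : R} {u : List I} :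
    A.Run (q, σ) (VSym.call c :: u.map VSym.int ++ [VSym.ret r]) (p, σ') ↔
      σ' = σ ∧ ∃ J, A.link J = (c, r) ∧ A.procTrans q J p ∧
        u.map VSym.int ∈ A.RecLang (some J) := by
  constructor
  · rintro (_ | ⟨hs, hr⟩)
    cases hs with | @call _ q₀ _ _ _ _ ht hc hcomp₀ hinit₀ => ?_
    obtain ⟨⟨q₁, τ⟩, hbody, _ | ⟨hret, _ | _⟩⟩ := run_append_iff.mp hr
    cases hret with | @ret _ _ _ J' _ hcomp₁ hfinal₁ hr' => ?_
    obtain ⟨hstack, hreg⟩ := run_map_int_iff.mp hbody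
    obtain ⟨rfl, rfl⟩ := List.cons_eq_cons.mp hstack
    obtain rfl : J' = _ :=
      Option.some_injective _ (hcomp₁.symm.trans (hreg.comp_eq.trans hcomp₀))
    exact ⟨rfl, _, Prod.ext hc hr', ht, q₀, q₁, hcomp₀, hinit₀, hcomp₁, hfinal₁,
      run_map_int_nil_iff.mp hbody⟩
  · rintro ⟨rfl, J, hlink, ht, q₀, q₁, hcomp₀, hinit₀, hcomp₁, hfinal₁, hbody⟩
    exact .cons (.call ht (congrArg Prod.fst hlink) hcomp₀ hinit₀)
      (run_append_iff.mpr ⟨_, run_map_int_nil_iff.mpr hbody,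
        .cons (.ret hcomp₁ hfinal₁ (congrArg Prod.snd hlink)) (.nil _)⟩)

theorem IsSPA.injective_call (hA : A.IsSPA) : Function.Injective fun J => (A.link J).1 :=
  fun J J' h => by_contra fun hne => hA.2 J J' hne h

theorem run_call_ret_of_run_call_ret (hinj : Function.Injective fun J => (A.link J).1)
    {q p q' p' : Q} {σ τ τ' : List Q} {c : C} {r : R} {u v : List I}
    (hu : A.Run (q, σ) (VSym.call c :: u.map VSym.int ++ [VSym.ret r]) (p, σ))
    (hv : A.Run (q', τ) (VSym.call c :: v.map VSym.int ++ [VSym.ret r]) (p', τ')) :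
    A.Run (q', τ) (VSym.call c :: u.map VSym.int ++ [VSym.ret r]) (p', τ') := by
  obtain ⟨-, J, hlink, -, hbody⟩ := run_call_ret_iff.mp hu
  obtain ⟨rfl, J', hlink', ht', -⟩ := run_call_ret_iff.mp hv
  obtain rfl : J' = J := hinj (by simp only [hlink, hlink'])
  exact run_call_ret_iff.mpr ⟨rfl, J', hlink', ht', hbody⟩

theorem IsSPA.carcar_mem_lang_of_carcr_mem {P Q : Type} {A : VRA Unit Unit Unit P Q}
    (hA : A.IsSPA) (h : [sc', sa', sr', sc', sr'] ∈ A.Lang) :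
    [sc', sa', sr', sc', sa', sr'] ∈ A.Lang := by
  obtain ⟨qi, qf, hci, hii, hcf, hif, hrun⟩ := h
  obtain ⟨⟨p, σ⟩, hcar, hcr⟩ := (run_append_iff (w₁ := [sc', sa', sr'])).mp hrun
  obtain ⟨rfl, -⟩ := (run_call_ret_iff (u := [()])).mp hcar
  exact ⟨qi, qf, hci, hii, hcf, hif, run_append_iff.mpr
    ⟨_, hcar, run_call_ret_of_run_call_ret (u := [()]) (v := []) hA.injective_call hcar hcr⟩⟩

end VRA

inductive CarcrState : Type
  | main₀ | main₁ | main₂ | body₀ | body₁ | empty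

open CarcrState in
/-- Two procedures share the call/return pair `⟨c, r⟩`: `false` accepts `a` and `true`
accepts `ε`, and the starting automaton calls `false` and then `true`; its language is
`{carcr}`. -/
def carcrVRA : VRA Unit Unit Unit Bool CarcrState where
  link _ := ((), ())
  comp
    | main₀ | main₁ | main₂ => none
    | body₀ | body₁ => some false
    | empty => some true
  init q := q = main₀ ∨ q = body₀ ∨ q = empty
  final q := q = main₂ ∨ q = body₁ ∨ q = empty
  intTrans q _ p := q = body₀ ∧ p = body₁
  procTrans q J p := (q = main₀ ∧ J = false ∧ p = main₁) ∨ (q = main₁ ∧ J = true ∧ p = main₂)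
  intTrans_comp := by rintro q a p ⟨rfl, rfl⟩; rfl
  procTrans_comp := by rintro q J p (⟨rfl, _, rfl⟩ | ⟨rfl, _, rfl⟩) <;> rfl

theorem carcrVRA_deterministic : carcrVRA.Deterministic := by
  refine ⟨?_, ?_, ?_, ?_⟩
  · have hinit : ∀ J, ∃ q, carcrVRA.comp q = J ∧ carcrVRA.init q := by
      rintro (_ | _ | _)
      exacts [⟨.main₀, rfl, .inl rfl⟩, ⟨.body₀, rfl, .inr (.inl rfl)⟩,
        ⟨.empty, rfl, .inr (.inr rfl)⟩]
    refine fun J => (hinit J).elim fun q hq => ⟨q, hq, ?_⟩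
    obtain ⟨rfl, hi⟩ := hq
    rintro q' ⟨hc, hi'⟩
    rcases hi with rfl | rfl | rfl <;> rcases hi' with rfl | rfl | rfl <;> first | rfl | cases hc
  · rintro q a p p' ⟨rfl, rfl⟩ ⟨-, rfl⟩; rfl
  · rintro q J p p' (⟨rfl, rfl, rfl⟩ | ⟨rfl, rfl, rfl⟩) (⟨h, -, rfl⟩ | ⟨h, -, rfl⟩) <;>
      first | rfl | cases h
  · rintro q J J' p p' (⟨rfl, rfl, rfl⟩ | ⟨rfl, rfl, rfl⟩) (⟨h, rfl, -⟩ | ⟨h, rfl, -⟩) - <;>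
      first | rfl | cases h

theorem carcrVRA_int_notMem_recLang_true : [sa'] ∉ carcrVRA.RecLang (some true) := by
  rintro ⟨q₀, q₁, hc, hi, -, -, _ | ⟨hs, -⟩⟩
  cases hs with | int ht => simp_all [carcrVRA]

theorem carcr_mem_carcrVRA_lang : [sc', sa', sr', sc', sr'] ∈ carcrVRA.Lang := by
  refine ⟨.main₀, .main₂, rfl, .inl rfl, rfl, .inl rfl,
    (VRA.run_append_iff (w₁ := [sc', sa', sr'])).mpr ⟨(.main₁, []), ?_, ?_⟩⟩
  · exact (VRA.run_call_ret_iff (u := [()])).mpr ⟨rfl, false, rfl, .inl ⟨rfl, rfl, rfl⟩,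
      .body₀, .body₁, rfl, .inr (.inl rfl), rfl, .inr (.inl rfl),
      .cons (.int ⟨rfl, rfl⟩) (.nil _)⟩
  · exact (VRA.run_call_ret_iff (u := [])).mpr ⟨rfl, true, rfl, .inr ⟨rfl, rfl, rfl⟩,
      .empty, .empty, rfl, .inr (.inr rfl), rfl, .inr (.inr rfl), .nil _⟩

theorem carcar_notMem_carcrVRA_lang : [sc', sa', sr', sc', sa', sr'] ∉ carcrVRA.Lang := by
  rintro ⟨qi, qf, hci, hii, -, -, hrun⟩
  obtain ⟨⟨p, σ⟩, hcar, hcar'⟩ := (VRA.run_append_iff (w₁ := [sc', sa', sr'])).mp hrun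
  obtain ⟨-, J, -, ht, -⟩ := (VRA.run_call_ret_iff (u := [()])).mp hcar
  obtain ⟨-, J', -, ht', hbody⟩ := (VRA.run_call_ret_iff (u := [()])).mp hcar'
  obtain rfl : qi = .main₀ := by
    rcases hii with rfl | rfl | rfl <;> first | rfl | cases hci
  obtain ⟨-, -, rfl⟩ : J = false ∧ p = .main₁ := by simpa [carcrVRA] using ht
  obtain ⟨rfl, -⟩ : J' = true ∧ qf = .main₂ := by simpa [carcrVRA] using ht'
  exact carcrVRA_int_notMem_recLang_true hbody

/-- every SPA accepting `carcr` also accepts `carcar`; consequently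
there is a deterministic VRA (accepting `carcr` but not `carcar`) that has no
equivalent SPA over the same pushdown alphabet. -/
theorem spa_strictly_weaker :
    (∀ (P Q : Type) (A : VRA Unit Unit Unit P Q), A.IsSPA →
      [sc', sa', sr', sc', sr'] ∈ A.Lang → [sc', sa', sr', sc', sa', sr'] ∈ A.Lang) ∧
    (∃ (P Q : Type) (B : VRA Unit Unit Unit P Q), B.Deterministic ∧
      [sc', sa', sr', sc', sr'] ∈ B.Lang ∧ [sc', sa', sr', sc', sa', sr'] ∉ B.Lang) :=
  ⟨fun _ _ _ hA => hA.carcar_mem_lang_of_carcr_mem, Bool, CarcrState, carcrVRA,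
    carcrVRA_deterministic, carcr_mem_carcrVRA_lang, carcar_notMem_carcrVRA_lang⟩
end

section
/- Every language of well-matched words accepted by a visibly recursive automaton is accepted by a visibly pushdown automaton, and conversely; i.e., VRAs and VPAs are equi-expressive over well-matched words. -/
/-- A visibly pushdown automaton over a pushdown alphabet, with stack alphabet Γ. -/
structure VPA (I C R Γ Q : Type) where
  init : Q → Prop
  final : Q → Prop
  intTrans : Q → I → Q → Prop
  callTrans : Q → C → Q → Γ → Prop
  retTrans : Q → R → Γ → Q → Prop

namespace VPA

variable {I C R Γ Q : Type}

inductive Step (B : VPA I C R Γ Q) : Q × List Γ → VSym I C R → Q × List Γ → Prop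
  | int {q q' : Q} {σ : List Γ} {a : I} :
      B.intTrans q a q' → Step B (q, σ) (VSym.int a) (q', σ)
  | call {q q' : Q} {σ : List Γ} {c : C} {γ : Γ} :
      B.callTrans q c q' γ → Step B (q, σ) (VSym.call c) (q', γ :: σ)
  | ret {q q' : Q} {σ : List Γ} {r : R} {γ : Γ} :
      B.retTrans q r γ q' → Step B (q, γ :: σ) (VSym.ret r) (q', σ)

inductive Run (B : VPA I C R Γ Q) : Q × List Γ → List (VSym I C R) → Q × List Γ → Prop
  | nil (cfg : Q × List Γ) : Run B cfg [] cfg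
  | cons {cfg₁ cfg₂ cfg₃ : Q × List Γ} {a : VSym I C R} {w : List (VSym I C R)} :
      Step B cfg₁ a cfg₂ → Run B cfg₂ w cfg₃ → Run B cfg₁ (a :: w) cfg₃

/-- The language of a VPA: words read from an initial state with empty stack to a
final state with empty stack. -/
def Lang (B : VPA I C R Γ Q) : Set (List (VSym I C R)) :=
  {w | ∃ qi qf, B.init qi ∧ B.final qf ∧ Run B (qi, []) w (qf, [])}

end VPA

/-!
A VRA is a VPA whose stack alphabet is its set of states: a call pushes the target of the
procedural transition and enters the linked component, a return pops that target.

Conversely, a VPA is simulated by a VRA whose procedural symbols are summaries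
`(c, q₁, γ, r, q₂)` of a call transition together with its matching return transition. The
component of such a summary starts in `q₁` and accepts in the states that have the return
transition on `r` popping `γ` to `q₂`. Cutting a VPA run at the return that matches its
first call turns it into a recursive run; in the other direction, a recursive run is a VPA run
once every return state on the VRA stack is replaced by the `γ` of its summary.
-/

namespace VPA

variable {I C R Γ Q : Type} {B : VPA I C R Γ Q}

theorem Run.append {c₁ c₂ c₃ : Q × List Γ} {w₁ w₂ : List (VSym I C R)}
    (h₁ : B.Run c₁ w₁ c₂) (h₂ : B.Run c₂ w₂ c₃) : B.Run c₁ (w₁ ++ w₂) c₃ := by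
  induction h₁ with
  | nil => exact h₂
  | cons hs _ ih => exact .cons hs (ih h₂)

theorem Step.append_stack (τ : List Γ) {q q' : Q} {σ σ' : List Γ} {a : VSym I C R}
    (h : B.Step (q, σ) a (q', σ')) : B.Step (q, σ ++ τ) a (q', σ' ++ τ) := by
  cases h with
  | int h => exact .int h
  | call h => exact .call h
  | ret h => exact .ret h

theorem Run.append_stack (τ : List Γ) {c c' : Q × List Γ} {w : List (VSym I C R)}
    (h : B.Run c w c') : B.Run (c.1, c.2 ++ τ) w (c'.1, c'.2 ++ τ) := by
  induction h with
  | nil => exact .nil _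
  | cons hs _ ih => exact .cons (hs.append_stack τ) ih

theorem Run.exists_first_pop {q qf : Q} {γ : Γ} {σ : List Γ} {w : List (VSym I C R)}
    (h : B.Run (q, γ :: σ) w (qf, [])) :
    ∃ w₁ r w₂ q₂ q₃, w = w₁ ++ VSym.ret r :: w₂ ∧ B.Run (q, []) w₁ (q₂, []) ∧
      B.retTrans q₂ r γ q₃ ∧ B.Run (q₃, σ) w₂ (qf, []) := by
  induction hn : w.length using Nat.strong_induction_on generalizing q γ σ w with
  | _ n ih =>
  cases h with
  | cons hs hrest =>
    cases hs with
    | int h =>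
      obtain ⟨w₁, r, w₂, q₂, q₃, rfl, h₁, hr, h₂⟩ := ih _ (by simp [← hn]) hrest rfl
      exact ⟨_ :: w₁, r, w₂, q₂, q₃, rfl, .cons (.int h) h₁, hr, h₂⟩
    | call h =>
      obtain ⟨w₁, r, w₂, q₂, q₃, rfl, h₁, hr, h₂⟩ := ih _ (by simp [← hn]) hrest rfl
      obtain ⟨w₁', r', w₂', q₄, q₅, rfl, h₁', hr', h₂'⟩ :=
        ih _ (by simp [← hn]; omega) h₂ rfl
      refine ⟨_ :: w₁ ++ VSym.ret r :: w₁', r', w₂', q₄, q₅, ?_,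
        .cons (.call h) ((h₁.append_stack [_]).append (.cons (.ret hr) h₁')), hr', h₂'⟩
      simp
    | ret h => exact ⟨[], _, _, q, _, rfl, .nil _, h, hrest⟩

end VPA

namespace VRA

variable {I C R P Q : Type} {A : VRA I C R P Q}

theorem Run.append {c₁ c₂ c₃ : Q × List Q} {w₁ w₂ : List (VSym I C R)}
    (h₁ : A.Run c₁ w₁ c₂) (h₂ : A.Run c₂ w₂ c₃) : A.Run c₁ (w₁ ++ w₂) c₃ := by
  induction h₁ with
  | nil => exact h₂
  | cons hs _ ih => exact .cons hs (ih h₂)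

variable (A) in
def toVPA : VPA I C R Q Q where
  init q := A.comp q = none ∧ A.init q
  final q := A.comp q = none ∧ A.final q
  intTrans := A.intTrans
  callTrans q c q' p :=
    ∃ J, A.procTrans q J p ∧ (A.link J).1 = c ∧ A.comp q' = some J ∧ A.init q'
  retTrans q r p q' := p = q' ∧ ∃ J, A.comp q = some J ∧ A.final q ∧ (A.link J).2 = r

theorem toVPA_step_iff {c c' : Q × List Q} {a : VSym I C R} :
    A.toVPA.Step c a c' ↔ A.Step c a c' := by
  constructor
  · rintro (h | ⟨J, h⟩ | ⟨rfl, J, h⟩)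
    · exact .int h
    · exact .call h.1 h.2.1 h.2.2.1 h.2.2.2
    · exact .ret h.1 h.2.1 h.2.2
  · rintro (h | ⟨h₁, h₂, h₃, h₄⟩ | ⟨h₁, h₂, h₃⟩)
    · exact .int h
    · exact .call ⟨_, h₁, h₂, h₃, h₄⟩
    · exact .ret ⟨rfl, _, h₁, h₂, h₃⟩

theorem toVPA_run_iff {c c' : Q × List Q} {w : List (VSym I C R)} :
    A.toVPA.Run c w c' ↔ A.Run c w c' := by
  constructor <;> intro h <;> induction h with
  | nil => exact .nil _
  | cons hs _ ih => first
    | exact .cons (toVPA_step_iff.1 hs) ih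
    | exact .cons (toVPA_step_iff.2 hs) ih

theorem toVPA_lang : A.toVPA.Lang = A.Lang := by
  ext w
  simp only [VPA.Lang, Lang, RecLang, toVPA_run_iff]
  simp only [toVPA, and_assoc]

end VRA

namespace VPA

variable {I C R Γ Q : Type} {B : VPA I C R Γ Q}

/-- `(c, q₁, γ, r, q₂)` stands for a call on `c` to `q₁` pushing `γ` together with a matching
return on `r` popping `γ` to `q₂`. -/
abbrev Summary (C Q Γ R : Type) : Type := C × Q × Γ × R × Q

variable (B) in
def toVRA : VRA I C R (Summary C Q Γ R) (Option (Summary C Q Γ R) × Q) where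
  link J := (J.1, J.2.2.2.1)
  comp s := s.1
  init s := match s.1 with
    | none => B.init s.2
    | some J => s.2 = J.2.1
  final s := match s.1 with
    | none => B.final s.2
    | some J => B.retTrans s.2 J.2.2.2.1 J.2.2.1 J.2.2.2.2
  intTrans s a t := t.1 = s.1 ∧ B.intTrans s.2 a t.2
  procTrans s J t := t.1 = s.1 ∧ t.2 = J.2.2.2.2 ∧ B.callTrans s.2 J.1 J.2.1 J.2.2.1
  intTrans_comp := fun _ _ _ h => h.1
  procTrans_comp := fun _ _ _ h => h.1

theorem toVRA_run_of_run {q qf : Q} {w : List (VSym I C R)} (h : B.Run (q, []) w (qf, []))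
    (K : Option (Summary C Q Γ R)) (σ : List (Option (Summary C Q Γ R) × Q)) :
    B.toVRA.Run ((K, q), σ) w ((K, qf), σ) := by
  induction hn : w.length using Nat.strong_induction_on generalizing q qf w K σ with
  | _ n ih =>
  cases h with
  | nil => exact .nil _
  | cons hs hrest =>
    cases hs with
    | @int _ q' _ _ h =>
      exact .cons (.int (q' := (K, q')) ⟨rfl, h⟩) (ih _ (by simp [← hn]) hrest K σ rfl)
    | @call _ q₁ _ c γ h =>
      obtain ⟨w₁, r, w₂, q₂, q₃, rfl, h₁, hr, h₂⟩ := hrest.exists_first_pop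
      have hlen : w₁.length < n ∧ w₂.length < n := by simp [← hn]; omega
      have enter : B.toVRA.Step ((K, q), σ) (.call c)
          ((some (c, q₁, γ, r, q₃), q₁), (K, q₃) :: σ) := .call ⟨rfl, rfl, h⟩ rfl rfl rfl
      have leave : B.toVRA.Step ((some (c, q₁, γ, r, q₃), q₂), (K, q₃) :: σ) (.ret r)
          ((K, q₃), σ) := .ret rfl hr rfl
      exact .cons enter ((ih _ hlen.1 h₁ _ _ rfl).append (.cons leave (ih _ hlen.2 h₂ K σ rfl)))

inductive StacksAgree :
    Option (Summary C Q Γ R) → List (Option (Summary C Q Γ R) × Q) → List Γ → Prop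
  | nil : StacksAgree none [] []
  | cons {K : Option (Summary C Q Γ R)} {σ : List (Option (Summary C Q Γ R) × Q)}
      {γs : List Γ} {c : C} {q₁ : Q} {γ : Γ} {r : R} {q₂ : Q} :
      StacksAgree K σ γs → StacksAgree (some (c, q₁, γ, r, q₂)) ((K, q₂) :: σ) (γ :: γs)

theorem step_of_toVRA_step {K K' : Option (Summary C Q Γ R)} {q q' : Q}
    {σ σ' : List (Option (Summary C Q Γ R) × Q)} {a : VSym I C R} {γs : List Γ}
    (h : B.toVRA.Step ((K, q), σ) a ((K', q'), σ')) (hγs : StacksAgree K σ γs) :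
    ∃ γs', StacksAgree K' σ' γs' ∧ B.Step (q, γs) a (q', γs') := by
  cases h with
  | int h =>
    obtain ⟨rfl, h⟩ := h
    exact ⟨γs, hγs, .int h⟩
  | @call _ _ p _ J _ hproc hlink hcomp hinit =>
    obtain ⟨c, q₁, γ, r, q₂⟩ := J
    obtain rfl : K' = _ := hcomp
    obtain rfl : q' = q₁ := hinit
    obtain ⟨rfl, rfl, hcall⟩ := hproc
    obtain rfl := hlink
    exact ⟨γ :: γs, .cons hγs, .call hcall⟩
  | ret hcomp hfinal hlink =>
    obtain rfl : K = _ := hcomp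
    cases hγs with
    | cons hγs =>
      obtain rfl := hlink
      exact ⟨_, hγs, .ret hfinal⟩

theorem run_of_toVRA_run
    {s s' : (Option (Summary C Q Γ R) × Q) × List (Option (Summary C Q Γ R) × Q)}
    {w : List (VSym I C R)} (h : B.toVRA.Run s w s') {γs : List Γ}
    (hγs : StacksAgree s.1.1 s.2 γs) :
    ∃ γs', StacksAgree s'.1.1 s'.2 γs' ∧ B.Run (s.1.2, γs) w (s'.1.2, γs') := by
  induction h generalizing γs with
  | nil => exact ⟨_, hγs, .nil _⟩
  | cons hs _ ih =>
    obtain ⟨γs₂, hγs₂, hstep⟩ := step_of_toVRA_step hs hγs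
    obtain ⟨γs₃, hγs₃, hrun⟩ := ih hγs₂
    exact ⟨γs₃, hγs₃, .cons hstep hrun⟩

theorem toVRA_lang : B.toVRA.Lang = B.Lang := by
  ext w
  constructor
  · rintro ⟨⟨_, qi⟩, ⟨_, qf⟩, rfl, hi, rfl, hf, h⟩
    obtain ⟨_, hγs, h⟩ := run_of_toVRA_run h .nil
    cases hγs
    exact ⟨qi, qf, hi, hf, h⟩
  · rintro ⟨qi, qf, hi, hf, h⟩
    exact ⟨(none, qi), (none, qf), rfl, hi, rfl, hf, toVRA_run_of_run h none []⟩

end VPA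

theorem vra_vpa_equiexpressive_general {I C R : Type} [Finite C] [Finite R]
    (L : Set (List (VSym I C R))) :
    (∃ (P Q : Type) (_ : Finite P) (_ : Finite Q) (A : VRA I C R P Q), A.Lang = L) ↔
    (∃ (Γ Q : Type) (_ : Finite Γ) (_ : Finite Q) (B : VPA I C R Γ Q), B.Lang = L) := by
  constructor
  · rintro ⟨P, Q, _, hQ, A, rfl⟩
    exact ⟨Q, Q, hQ, hQ, A.toVPA, VRA.toVPA_lang⟩
  · rintro ⟨Γ, Q, _, _, B, rfl⟩
    exact ⟨_, _, inferInstance, inferInstance, B.toVRA, VPA.toVRA_lang⟩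

/-- VRAs and VPAs are equi-expressive over well-matched words: a
language of well-matched words is accepted by some (finite) VRA iff it is
accepted by some (finite) VPA. -/
theorem vra_vpa_equiexpressive {I C R : Type} [Finite I] [Finite C] [Finite R]
    (L : Set (List (VSym I C R))) (hL : ∀ w ∈ L, WellMatched w) :
    (∃ (P Q : Type) (_ : Finite P) (_ : Finite Q) (A : VRA I C R P Q), A.Lang = L) ↔
    (∃ (Γ Q : Type) (_ : Finite Γ) (_ : Finite Q) (B : VPA I C R Γ Q), B.Lang = L) :=
  vra_vpa_equiexpressive_general L
end

section
/- For a VRA A, define Reach_0 as the set of all initial states of all component automata, 𝒥_i = {J ∈ Σ_proc : F^J ∩ Reach_i ≠ ∅}, and Reach_{i+1} = Reach_i ∪ {p : ∃ q ∈ Reach_i, ∃ a ∈ Σ_int ∪ 𝒥_i with transition q →^a p}. Let Reach_* be the fixpoint of this iteration. Then for every J ∈ Σ_proc ∪ {S}: L(A^J) ≠ ∅ if and only if F^J ∩ Reach_* ≠ ∅. In particular, L(A) = ∅ iff F^S ∩ Reach_* = ∅. -/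
namespace VRA

variable {I C R P Q : Type}

/-- The reachability iteration for the emptiness check: `ReachSeq 0` is the set
of all initial states; at each step, we may follow internal transitions and
procedural transitions on symbols `J` whose component already has a reached final
state. -/
def ReachSeq (A : VRA I C R P Q) : ℕ → Set Q
  | 0 => {q | A.init q}
  | n + 1 => A.ReachSeq n ∪
      {p | ∃ q ∈ A.ReachSeq n,
        (∃ a : I, A.intTrans q a p) ∨
        ∃ J : P, (∃ qf, A.comp qf = some J ∧ A.final qf ∧ qf ∈ A.ReachSeq n) ∧
          A.procTrans q J p}

/-- The fixpoint of the (monotone) reachability iteration. -/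
def ReachStar (A : VRA I C R P Q) : Set Q := ⋃ n, A.ReachSeq n

end VRA

namespace VRA

variable {I C R P Q : Type} {A : VRA I C R P Q}

theorem monotone_reachSeq (A : VRA I C R P Q) : Monotone A.ReachSeq :=
  monotone_nat_of_le_succ fun _ => Set.subset_union_left

theorem init_mem_reachStar {q : Q} (hq : A.init q) : q ∈ A.ReachStar :=
  Set.mem_iUnion_of_mem 0 hq

theorem mem_reachStar_of_intTrans {q p : Q} {a : I} (hq : q ∈ A.ReachStar)
    (h : A.intTrans q a p) : p ∈ A.ReachStar := by
  obtain ⟨n, hn⟩ := Set.mem_iUnion.mp hq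
  exact Set.mem_iUnion_of_mem (n + 1) (Or.inr ⟨q, hn, Or.inl ⟨a, h⟩⟩)

theorem mem_reachStar_of_procTrans {q qf p : Q} {J : P} (hq : q ∈ A.ReachStar)
    (hqf : qf ∈ A.ReachStar) (hcomp : A.comp qf = some J) (hfinal : A.final qf)
    (h : A.procTrans q J p) : p ∈ A.ReachStar := by
  obtain ⟨m, hm⟩ := Set.mem_iUnion.mp hq
  obtain ⟨n, hn⟩ := Set.mem_iUnion.mp hqf
  refine Set.mem_iUnion_of_mem (max m n + 1)
    (Or.inr ⟨q, ?_, Or.inr ⟨J, ⟨qf, hcomp, hfinal, ?_⟩, h⟩⟩)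
  · exact A.monotone_reachSeq (le_max_left m n) hm
  · exact A.monotone_reachSeq (le_max_right m n) hn

theorem Step.append_stack {c c' : Q × List Q} {a : VSym I C R} (h : Step A c a c')
    (τ : List Q) : Step A (c.1, c.2 ++ τ) a (c'.1, c'.2 ++ τ) := by
  cases h with
  | int h => exact .int h
  | call h₁ h₂ h₃ h₄ => exact .call h₁ h₂ h₃ h₄
  | ret h₁ h₂ h₃ => exact .ret h₁ h₂ h₃

theorem Run.append_stack {c c' : Q × List Q} {w : List (VSym I C R)} (h : Run A c w c')
    (τ : List Q) : Run A (c.1, c.2 ++ τ) w (c'.1, c'.2 ++ τ) := by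
  induction h with
  | nil => exact .nil _
  | cons hs _ ih => exact .cons (hs.append_stack τ) ih

theorem Run.append_s16 {c₁ c₂ c₃ : Q × List Q} {w w' : List (VSym I C R)} (h : Run A c₁ w c₂)
    (h' : Run A c₂ w' c₃) : Run A c₁ (w ++ w') c₃ := by
  induction h with
  | nil => exact h'
  | cons hs _ ih => exact .cons hs (ih h')

theorem Run.of_procTrans {q p : Q} {J : P} {σ : List Q} {w : List (VSym I C R)}
    (h : A.procTrans q J p) (hw : w ∈ A.RecLang (some J)) :
    Run A (q, σ) (VSym.call (A.link J).1 :: w ++ [VSym.ret (A.link J).2]) (p, σ) := by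
  obtain ⟨qi, qf, hci, hi, hcf, hf, hrun⟩ := hw
  have hinner : Run A (qi, p :: σ) w (qf, p :: σ) := by
    simpa using hrun.append_stack (p :: σ)
  exact .cons (.call h rfl hci hi) (hinner.append_s16 (.cons (.ret hcf hf rfl) (.nil _)))

theorem exists_run_of_mem_reachSeq {p : Q} {n : ℕ} (hp : p ∈ A.ReachSeq n) :
    ∃ qi w, A.init qi ∧ A.comp qi = A.comp p ∧ Run A (qi, []) w (p, []) := by
  induction n generalizing p with
  | zero => exact ⟨p, [], hp, rfl, .nil _⟩
  | succ n ih =>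
    rcases hp with hp | ⟨q, hq, ⟨a, ht⟩ | ⟨J, ⟨qf, hcf, hf, hqf⟩, ht⟩⟩
    · exact ih hp
    · obtain ⟨qi, w, hi, hci, hrun⟩ := ih hq
      exact ⟨qi, w ++ [VSym.int a], hi, hci.trans (A.intTrans_comp ht).symm,
        hrun.append_s16 (.cons (.int ht) (.nil _))⟩
    · obtain ⟨qi, w, hi, hci, hrun⟩ := ih hq
      obtain ⟨qi', w', hi', hci', hrun'⟩ := ih hqf
      have hw' : w' ∈ A.RecLang (some J) := ⟨qi', qf, hci'.trans hcf, hi', hcf, hf, hrun'⟩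
      exact ⟨qi, _, hi, hci.trans (A.procTrans_comp ht).symm,
        hrun.append_s16 (.of_procTrans ht hw')⟩

/-- `StackReached J σ`, for `J` the procedure currently running: each return address
`d` on `σ` is the target of a procedural transition, from a reached state, on the
procedure running just above it. -/
def StackReached (A : VRA I C R P Q) : Option P → List Q → Prop
  | _, [] => True
  | J, d :: δ => ∃ q ∈ A.ReachStar, ∃ K, J = some K ∧ A.procTrans q K d ∧
      StackReached A (A.comp d) δ

theorem Step.reached {c c' : Q × List Q} {a : VSym I C R} (h : Step A c a c')
    (hq : c.1 ∈ A.ReachStar) (hσ : A.StackReached (A.comp c.1) c.2) :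
    c'.1 ∈ A.ReachStar ∧ A.StackReached (A.comp c'.1) c'.2 := by
  cases h with
  | int ht => exact ⟨mem_reachStar_of_intTrans hq ht, by rwa [A.intTrans_comp ht]⟩
  | call ht _ hcomp hinit =>
    refine ⟨init_mem_reachStar hinit, ?_⟩
    rw [hcomp]
    exact ⟨_, hq, _, rfl, ht, by rwa [A.procTrans_comp ht]⟩
  | ret _ hfinal _ =>
    obtain ⟨q, hq', K, hK, ht, hδ⟩ := hσ
    exact ⟨mem_reachStar_of_procTrans hq' hq hK hfinal ht, hδ⟩

theorem Run.reached {c c' : Q × List Q} {w : List (VSym I C R)} (h : Run A c w c')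
    (hq : c.1 ∈ A.ReachStar) (hσ : A.StackReached (A.comp c.1) c.2) :
    c'.1 ∈ A.ReachStar ∧ A.StackReached (A.comp c'.1) c'.2 := by
  induction h with
  | nil => exact ⟨hq, hσ⟩
  | cons hs _ ih => exact ih (hs.reached hq hσ).1 (hs.reached hq hσ).2

theorem recLang_nonempty_iff (J : Option P) :
    (A.RecLang J).Nonempty ↔ ∃ q, A.comp q = J ∧ A.final q ∧ q ∈ A.ReachStar := by
  constructor
  · rintro ⟨w, qi, qf, -, hi, hcf, hf, hrun⟩
    exact ⟨qf, hcf, hf, (hrun.reached (init_mem_reachStar hi) trivial).1⟩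
  · rintro ⟨q, hc, hf, hq⟩
    obtain ⟨n, hn⟩ := Set.mem_iUnion.mp hq
    obtain ⟨qi, w, hi, hci, hrun⟩ := exists_run_of_mem_reachSeq hn
    exact ⟨w, qi, q, hci.trans hc, hi, hc, hf, hrun⟩

end VRA

theorem VRA.emptiness_via_reach_general {I C R P Q : Type}
    (A : VRA I C R P Q) :
    (∀ J : Option P, (A.RecLang J).Nonempty ↔
      ∃ q, A.comp q = J ∧ A.final q ∧ q ∈ A.ReachStar) ∧
    (A.Lang = ∅ ↔ ¬ ∃ q, A.comp q = none ∧ A.final q ∧ q ∈ A.ReachStar) := by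
  refine ⟨recLang_nonempty_iff, ?_⟩
  rw [← Set.not_nonempty_iff_eq_empty]
  exact not_congr (recLang_nonempty_iff none)

/-- for every component `J ∈ Σ_proc ∪ {S}` of a finite VRA, the
recursive language `L(A^J)` is nonempty iff some final state of `A^J` is in the
reachability fixpoint; in particular `L(A) = ∅` iff no final state of the
starting automaton is reached. -/
theorem VRA.emptiness_via_reach {I C R P Q : Type} [Finite Q]
    (A : VRA I C R P Q) :
    (∀ J : Option P, (A.RecLang J).Nonempty ↔
      ∃ q, A.comp q = J ∧ A.final q ∧ q ∈ A.ReachStar) ∧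
    (A.Lang = ∅ ↔ ¬ ∃ q, A.comp q = none ∧ A.final q ∧ q ∈ A.ReachStar) :=
  VRA.emptiness_via_reach_general A
end
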